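/- arXiv:2112.09082 — 3 statements merged into one kernel-verified Lean document; each statement's English description precedes it below -/
import Mathlib

section
/- The quantum theta functions satisfy the commutation relation s ϑ̂_2 ϑ̂_4 − s^{-1} ϑ̂_4 ϑ̂_2 = (s − s^{-1}) C_2·1 + (s^2 − s^{-2}) t^{E_1} ϑ̂_1 in A (here s = q^{1/2}). -/
noncomputable section

/-- `R = ℂ[s^{±1}, t_H^{±1}, t₁^{±1}, …, t₅^{±1}]`, the Laurent polynomial ring in
seven variables over `ℂ` (index 0 is `s = q^{1/2}`, index 1 is `t_H`, indices 2–6 are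
`t₁, …, t₅`), realized as the monoid algebra of `ℤ⁷`. -/
abbrev Rq : Type := AddMonoidAlgebra ℂ (Fin 7 → ℤ)

/-- The power `s^k ∈ R` of the quantum parameter `s = q^{1/2}`. -/
def sQ (k : ℤ) : Rq := AddMonoidAlgebra.single ![k, 0, 0, 0, 0, 0, 0] 1

/-- The monomial `t^{aH + b₁E₁ + ⋯ + b₅E₅} = t_H^a t₁^{b₁} ⋯ t₅^{b₅} ∈ R`. -/
def tq (a b1 b2 b3 b4 b5 : ℤ) : Rq := AddMonoidAlgebra.single ![0, a, b1, b2, b3, b4, b5] 1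

/-- `det((v₁,v₂),(w₁,w₂)) = v₁w₂ - v₂w₁`. -/
def detq (v w : ℤ × ℤ) : ℤ := v.1 * w.2 - v.2 * w.1

variable {A : Type} [Ring A] [Algebra Rq A]

/-- The quantum torus relations: `ẑ^{(0,0)} = 1` and
`ẑ^v ẑ^w = s^{det(v,w)} ẑ^{v+w}` for all `v, w ∈ ℤ²`. -/
def IsQuantumTorus (zhat : ℤ × ℤ → A) : Prop :=
  zhat 0 = 1 ∧ ∀ v w : ℤ × ℤ, zhat v * zhat w = sQ (detq v w) • zhat (v + w)

/-- `ϑ̂₁ = ẑ^{(-1,-1)} + t^{E₁-E₅} ẑ^{(-1,-2)} + t^{H-E₄-E₅} ẑ^{(0,-1)}`. -/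
def θq₁ (zhat : ℤ × ℤ → A) : A :=
  zhat (-1, -1) + tq 0 1 0 0 0 (-1) • zhat (-1, -2) + tq 1 0 0 0 (-1) (-1) • zhat (0, -1)

/-- `ϑ̂₂ = ẑ^{(-1,0)} + t^{H-E₁-E₃} ẑ^{(0,1)} + t^{E₁-E₅} ẑ^{(-1,-1)}`. -/
def θq₂ (zhat : ℤ × ℤ → A) : A :=
  zhat (-1, 0) + tq 1 (-1) 0 (-1) 0 0 • zhat (0, 1) + tq 0 1 0 0 0 (-1) • zhat (-1, -1)

/-- `ϑ̂₃ = t^{H-E₁} ẑ^{(1,1)} + t^{2H-2E₁-E₂-E₃} ẑ^{(1,2)} + t^{H-E₁-E₂} ẑ^{(0,1)}`. -/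
def θq₃ (zhat : ℤ × ℤ → A) : A :=
  tq 1 (-1) 0 0 0 0 • zhat (1, 1) + tq 2 (-2) (-1) (-1) 0 0 • zhat (1, 2)
    + tq 1 (-1) (-1) 0 0 0 • zhat (0, 1)

/-- `ϑ̂₄ = t^{E₁} ẑ^{(0,-1)} + t^{H-E₄} ẑ^{(1,0)} + t^{2H-E₁-E₂-E₃-E₄} ẑ^{(1,1)}`. -/
def θq₄ (zhat : ℤ × ℤ → A) : A :=
  tq 0 1 0 0 0 0 • zhat (0, -1) + tq 1 0 0 0 (-1) 0 • zhat (1, 0)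
    + tq 2 (-1) (-1) (-1) (-1) 0 • zhat (1, 1)

/-- `C₁ = t^{H-E₁} + t^{2H-E₁-E₂-E₃-E₅} + t^{2H-E₁-E₂-E₄-E₅} ∈ R`. -/
def Cq₁ : Rq :=
  tq 1 (-1) 0 0 0 0 + tq 2 (-1) (-1) (-1) 0 (-1) + tq 2 (-1) (-1) 0 (-1) (-1)

/-- `C₂ = t^{H-E₄} + t^{H-E₃} + t^{2H-E₂-E₃-E₄-E₅} ∈ R`. -/
def Cq₂ : Rq :=
  tq 1 0 0 0 (-1) 0 + tq 1 0 0 (-1) 0 0 + tq 2 0 (-1) (-1) (-1) (-1)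

/-! Expanding `ϑ̂₂` and `ϑ̂₄` gives nine pairs of monomials. For monomials the quantum commutator
`s ẑ^v ẑ^w - s⁻¹ ẑ^w ẑ^v` equals `(s^{1+d} - s^{-(1+d)}) ẑ^{v+w}` with `d = det(v,w)`, so it vanishes
when `d = -1`. Of the nine pairs, three have `d = -1`, the three with `d = 0` land on `ẑ^0 = 1` and
sum to `(s - s⁻¹) C₂`, and the three with `d = 1` sum to `(s² - s⁻²) t^{E₁} ϑ̂₁`. -/

lemma sQ_mul_sQ (m n : ℤ) : sQ m * sQ n = sQ (m + n) := by
  simp only [sQ, AddMonoidAlgebra.single_mul_single, one_mul, Matrix.cons_add_cons,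
    Matrix.empty_add_empty, add_zero]

lemma tq_smul_tq_smul {M : Type*} [AddCommMonoid M] [Module Rq M]
    (a b1 b2 b3 b4 b5 a' b1' b2' b3' b4' b5' : ℤ) (x : M) :
    tq a b1 b2 b3 b4 b5 • tq a' b1' b2' b3' b4' b5' • x
      = tq (a + a') (b1 + b1') (b2 + b2') (b3 + b3') (b4 + b4') (b5 + b5') • x := by
  simp only [← mul_smul, tq, AddMonoidAlgebra.single_mul_single, one_mul, Matrix.cons_add_cons,
    Matrix.empty_add_empty, add_zero]

lemma detq_anticomm (v w : ℤ × ℤ) : detq w v = -detq v w := by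
  simp only [detq]
  ring

def qComm (x y : A) : A := sQ 1 • (x * y) - sQ (-1) • (y * x)

lemma qComm_add_left (x x' y : A) : qComm (x + x') y = qComm x y + qComm x' y := by
  simp only [qComm, add_mul, mul_add, smul_add]
  abel

lemma qComm_add_right (x y y' : A) : qComm x (y + y') = qComm x y + qComm x y' := by
  simp only [qComm, add_mul, mul_add, smul_add]
  abel

lemma qComm_smul_left (a : Rq) (x y : A) : qComm (a • x) y = a • qComm x y := by
  simp only [qComm, smul_mul_assoc, mul_smul_comm, smul_sub, smul_comm a]

lemma qComm_smul_right (a : Rq) (x y : A) : qComm x (a • y) = a • qComm x y := by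
  simp only [qComm, smul_mul_assoc, mul_smul_comm, smul_sub, smul_comm a]

lemma IsQuantumTorus.qComm_eq {zhat : ℤ × ℤ → A} (hz : IsQuantumTorus zhat) (v w : ℤ × ℤ) :
    qComm (zhat v) (zhat w)
      = (sQ (1 + detq v w) - sQ (-(1 + detq v w))) • zhat (v + w) := by
  rw [qComm, hz.2, hz.2, detq_anticomm v w, add_comm w, smul_smul, smul_smul, sQ_mul_sQ, sQ_mul_sQ,
    sub_smul, neg_add]

theorem quantum_commutation_two_four {A : Type} [Ring A] [Algebra Rq A] (zhat : ℤ × ℤ → A)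
    (hz : IsQuantumTorus zhat) :
    sQ 1 • (θq₂ zhat * θq₄ zhat) - sQ (-1) • (θq₄ zhat * θq₂ zhat)
      = algebraMap Rq A ((sQ 1 - sQ (-1)) * Cq₂)
        + ((sQ 2 - sQ (-2)) * tq 0 1 0 0 0 0) • θq₁ zhat := by
  have h0 : zhat (0, 0) = 1 := hz.1
  change qComm (θq₂ zhat) (θq₄ zhat) = _
  simp only [θq₁, θq₂, θq₄, Cq₂, qComm_add_left, qComm_add_right, qComm_smul_left,
    qComm_smul_right, hz.qComm_eq, detq, Prod.mk_add_mk, mul_smul, smul_add, tq_smul_tq_smul,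
    Algebra.algebraMap_eq_smul_one]
  norm_num only [h0]
  module

end
end

section
/- The quantum theta functions satisfy the reversed-order product expansion ϑ̂_4 · ϑ̂_2 = C_2·1 + s^{-1} t^{E_1} ϑ̂_1 + s t^{H-E_3-E_4} ϑ̂_3 in A (here s = q^{1/2}). -/
noncomputable section

variable {A : Type} [Ring A] [Algebra Rq A]

theorem sQ_zero : sQ 0 = 1 := by
  rw [sQ, AddMonoidAlgebra.one_def]
  congr
  ext i
  fin_cases i <;> rfl

theorem tq_mul_tq (a b₁ b₂ b₃ b₄ b₅ a' b₁' b₂' b₃' b₄' b₅' : ℤ) :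
    tq a b₁ b₂ b₃ b₄ b₅ * tq a' b₁' b₂' b₃' b₄' b₅'
      = tq (a + a') (b₁ + b₁') (b₂ + b₂') (b₃ + b₃') (b₄ + b₄') (b₅ + b₅') := by
  simp only [tq, AddMonoidAlgebra.single_mul_single, mul_one, Matrix.cons_add_cons,
    Matrix.empty_add_empty, add_zero]

namespace IsQuantumTorus

variable {zhat : ℤ × ℤ → A}

theorem smul_mul_smul (hz : IsQuantumTorus zhat) (a b : Rq) (v w : ℤ × ℤ) :
    (a • zhat v) * (b • zhat w) = (sQ (detq v w) * (a * b)) • zhat (v + w) := by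
  rw [smul_mul_smul_comm, hz.2, smul_smul, mul_comm (a * b)]

theorem smul_mul (hz : IsQuantumTorus zhat) (a : Rq) (v w : ℤ × ℤ) :
    (a • zhat v) * zhat w = (sQ (detq v w) * a) • zhat (v + w) := by
  rw [smul_mul_assoc, hz.2, smul_smul, mul_comm a]

theorem algebraMap_eq_smul (hz : IsQuantumTorus zhat) (c : Rq) :
    algebraMap Rq A c = c • zhat 0 := by
  rw [Algebra.algebraMap_eq_smul_one, hz.1]

/- Each of the nine products `ẑ^v ẑ^w` in `ϑ̂₄ ϑ̂₂` matches exactly one term on the right: the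
three with `det(v, w) = 0` have `v + w = 0` and sum to `C₂`, those with `det(v, w) = -1` give
`s⁻¹ t^{E₁} ϑ̂₁`, and those with `det(v, w) = 1` give `s t^{H-E₃-E₄} ϑ̂₃`. -/

theorem algebraMap_Cq₂_eq (hz : IsQuantumTorus zhat) :
    algebraMap Rq A Cq₂
      = tq 0 1 0 0 0 0 • zhat (0, -1) * (tq 1 (-1) 0 (-1) 0 0 • zhat (0, 1))
        + tq 1 0 0 0 (-1) 0 • zhat (1, 0) * zhat (-1, 0)
        + tq 2 (-1) (-1) (-1) (-1) 0 • zhat (1, 1) * (tq 0 1 0 0 0 (-1) • zhat (-1, -1)) := by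
  simp only [hz.algebraMap_eq_smul, hz.smul_mul_smul, hz.smul_mul, Cq₂, detq, tq_mul_tq,
    Prod.mk_add_mk, add_smul]
  norm_num [sQ_zero, Prod.mk_zero_zero]
  abel

theorem smul_θq₁_eq (hz : IsQuantumTorus zhat) :
    (sQ (-1) * tq 0 1 0 0 0 0) • θq₁ zhat
      = tq 0 1 0 0 0 0 • zhat (0, -1) * zhat (-1, 0)
        + tq 0 1 0 0 0 0 • zhat (0, -1) * (tq 0 1 0 0 0 (-1) • zhat (-1, -1))
        + tq 1 0 0 0 (-1) 0 • zhat (1, 0) * (tq 0 1 0 0 0 (-1) • zhat (-1, -1)) := by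
  simp only [hz.smul_mul_smul, hz.smul_mul, θq₁, detq, smul_add, smul_smul, mul_assoc, tq_mul_tq,
    Prod.mk_add_mk]
  norm_num

theorem smul_θq₃_eq (hz : IsQuantumTorus zhat) :
    (sQ 1 * tq 1 0 0 (-1) (-1) 0) • θq₃ zhat
      = tq 1 0 0 0 (-1) 0 • zhat (1, 0) * (tq 1 (-1) 0 (-1) 0 0 • zhat (0, 1))
        + tq 2 (-1) (-1) (-1) (-1) 0 • zhat (1, 1) * (tq 1 (-1) 0 (-1) 0 0 • zhat (0, 1))
        + tq 2 (-1) (-1) (-1) (-1) 0 • zhat (1, 1) * zhat (-1, 0) := by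
  simp only [hz.smul_mul_smul, hz.smul_mul, θq₃, detq, smul_add, smul_smul, mul_assoc, tq_mul_tq,
    Prod.mk_add_mk]
  norm_num

end IsQuantumTorus

theorem quantum_theta_four_mul_theta_two {A : Type} [Ring A] [Algebra Rq A] (zhat : ℤ × ℤ → A)
    (hz : IsQuantumTorus zhat) :
    θq₄ zhat * θq₂ zhat = algebraMap Rq A Cq₂
      + (sQ (-1) * tq 0 1 0 0 0 0) • θq₁ zhat
      + (sQ 1 * tq 1 0 0 (-1) (-1) 0) • θq₃ zhat := by
  rw [hz.algebraMap_Cq₂_eq, hz.smul_θq₁_eq, hz.smul_θq₃_eq]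
  simp only [θq₄, θq₂, add_mul, mul_add]
  abel

end
end

section
/- The theta function ϑ_2 of the quartic del Pezzo surface is obtained from the initial monomial x^{-1} by crossing the two walls with functions 1+t^{E_1-E_5}y^{-1} and 1+t^{H-E_1-E_3}xy: for any field homomorphisms σ_2, σ_3 : K → K fixing ℂ(t_H, t_1, …, t_5) pointwise and satisfying σ_2(x) = x(1+t^{E_1-E_5}y^{-1})^{-1}, σ_2(y) = y, σ_3(x) = x(1+t^{H-E_1-E_3}xy)^{-1}, σ_3(y) = y(1+t^{H-E_1-E_3}xy), one has σ_3(σ_2(x^{-1})) = ϑ_2. -/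
noncomputable section

/-- `K = ℂ(t_H, t₁, t₂, t₃, t₄, t₅, x, y)`, the field of rational functions in eight
variables over `ℂ` (index 0 is `t_H`, indices 1–5 are `t₁,…,t₅`, index 6 is `x`,
index 7 is `y`). -/
abbrev Kdp : Type := FractionRing (MvPolynomial (Fin 8) ℂ)

/-- The `i`-th variable, as an element of `K`. -/
def vK (i : Fin 8) : Kdp :=
  algebraMap (MvPolynomial (Fin 8) ℂ) Kdp (MvPolynomial.X i)

/-- The monomial `t^{aH + b₁E₁ + ⋯ + b₅E₅} = t_H^a t₁^{b₁} ⋯ t₅^{b₅} ∈ K`. -/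
def tK (a b1 b2 b3 b4 b5 : ℤ) : Kdp :=
  vK 0 ^ a * vK 1 ^ b1 * vK 2 ^ b2 * vK 3 ^ b3 * vK 4 ^ b4 * vK 5 ^ b5

/-- `x ∈ K`. -/
def xK : Kdp := vK 6

/-- `y ∈ K`. -/
def yK : Kdp := vK 7

/-- The subfield `ℂ(t_H, t₁, …, t₅) ⊆ K`. -/
def Ft : Subfield Kdp :=
  Subfield.closure (Set.range (algebraMap ℂ Kdp) ∪ {vK 0, vK 1, vK 2, vK 3, vK 4, vK 5})

/-- `ϑ₁ = x⁻¹y⁻¹ + t^{E₁-E₅} x⁻¹y⁻² + t^{H-E₄-E₅} y⁻¹ ∈ K`. -/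
def θK₁ : Kdp :=
  xK⁻¹ * yK⁻¹ + tK 0 1 0 0 0 (-1) * xK⁻¹ * yK ^ (-2 : ℤ) + tK 1 0 0 0 (-1) (-1) * yK⁻¹

/-- `ϑ₂ = x⁻¹ + t^{H-E₁-E₃} y + t^{E₁-E₅} x⁻¹y⁻¹ ∈ K`. -/
def θK₂ : Kdp :=
  xK⁻¹ + tK 1 (-1) 0 (-1) 0 0 * yK + tK 0 1 0 0 0 (-1) * xK⁻¹ * yK⁻¹

/-- `ϑ₃ = t^{H-E₁} xy + t^{2H-2E₁-E₂-E₃} xy² + t^{H-E₁-E₂} y ∈ K`. -/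
def θK₃ : Kdp :=
  tK 1 (-1) 0 0 0 0 * xK * yK + tK 2 (-2) (-1) (-1) 0 0 * xK * yK ^ 2
    + tK 1 (-1) (-1) 0 0 0 * yK

/-- `ϑ₄ = t^{E₁} y⁻¹ + t^{H-E₄} x + t^{2H-E₁-E₂-E₃-E₄} xy ∈ K`. -/
def θK₄ : Kdp :=
  tK 0 1 0 0 0 0 * yK⁻¹ + tK 1 0 0 0 (-1) 0 * xK + tK 2 (-1) (-1) (-1) (-1) 0 * xK * yK


lemma vK_mem_Ft (i : Fin 8) (hi : (i:ℕ) ≤ 5) : vK i ∈ Ft := by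
  apply Subfield.subset_closure
  right
  fin_cases i <;> simp_all

lemma tK_mem_Ft (a b1 b2 b3 b4 b5 : ℤ) : tK a b1 b2 b3 b4 b5 ∈ Ft := by
  unfold tK
  repeat' apply Subfield.mul_mem
  all_goals exact Subfield.zpow_mem _ (vK_mem_Ft _ (by decide)) _

lemma vK_ne_zero (i : Fin 8) : vK i ≠ 0 := by
  unfold vK
  rw [map_ne_zero_iff _ (IsFractionRing.injective (MvPolynomial (Fin 8) ℂ) Kdp)]
  exact MvPolynomial.X_ne_zero i

lemma tK_ne_zero (a b1 b2 b3 b4 b5 : ℤ) : tK a b1 b2 b3 b4 b5 ≠ 0 := by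
  unfold tK
  repeat' apply mul_ne_zero
  all_goals exact zpow_ne_zero _ (vK_ne_zero _)

set_option synthInstance.maxHeartbeats 1000000 in
set_option maxHeartbeats 2000000 in
/-- `ϑ₂` is obtained from the initial monomial `x⁻¹` by crossing the two walls
with functions `1+t^{E₁-E₅}y⁻¹` and `1+t^{H-E₁-E₃}xy`. -/
theorem theta_two_from_wall_crossing (σ₂ σ₃ : Kdp →+* Kdp)
    (hσ₂fix : ∀ z ∈ Ft, σ₂ z = z) (hσ₃fix : ∀ z ∈ Ft, σ₃ z = z)
    (hσ₂x : σ₂ xK = xK * (1 + tK 0 1 0 0 0 (-1) * yK⁻¹)⁻¹)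
    (hσ₂y : σ₂ yK = yK)
    (hσ₃x : σ₃ xK = xK * (1 + tK 1 (-1) 0 (-1) 0 0 * xK * yK)⁻¹)
    (hσ₃y : σ₃ yK = yK * (1 + tK 1 (-1) 0 (-1) 0 0 * xK * yK)) :
    σ₃ (σ₂ xK⁻¹) = θK₂ := by
  have hx : xK ≠ 0 := vK_ne_zero 6
  have hy : yK ≠ 0 := vK_ne_zero 7
  set t : Kdp := tK 0 1 0 0 0 (-1) with ht
  set s : Kdp := tK 1 (-1) 0 (-1) 0 0 with hs
  have hσ₃t : σ₃ t = t := hσ₃fix _ (tK_mem_Ft _ _ _ _ _ _)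
  have hW2 : (1 + t * yK⁻¹) ≠ 0 := by
    intro h
    have : σ₂ xK ≠ 0 := fun h0 => hx (σ₂.injective (by simpa using h0))
    rw [hσ₂x, h] at this
    simp at this
  have hW3 : (1 + s * xK * yK) ≠ 0 := by
    intro h
    have : σ₃ yK ≠ 0 := fun h0 => hy (σ₃.injective (by simpa using h0))
    rw [hσ₃y, h] at this
    simp at this
  have h2 : σ₂ xK⁻¹ = xK⁻¹ + t * xK⁻¹ * yK⁻¹ := by
    rw [map_inv₀, hσ₂x]
    field_simp
  rw [h2, map_add, map_mul, map_mul, hσ₃t, map_inv₀, map_inv₀, hσ₃x, hσ₃y]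
  unfold θK₂
  rw [← ht, ← hs]
  have hW3' : 1 + xK * s * yK ≠ 0 := by convert hW3 using 1; ring
  field_simp


end
end
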